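/- Under the same block measurement model y = Σ_{j∈U} A_j x_j + n, with σ_min = min_i σ_min(A_i) the smallest singular value among all blocks, μ_B the block mutual coherence, ‖x_min‖_2 = min_{j∈U} ‖x_j‖_2, and assuming ‖(A_j^H A_j)^{-1/2} A_j^H‖_2 ≤ 1 for all j, the following lower bound holds: min_{j∈U} ‖(A_j^H A_j)^{-1/2} A_j^H y‖_2 ≥ σ_min ‖x_min‖_2 − μ_B Σ_{j∈U} ‖x_j‖_2 + μ_B ‖x_min‖_2 − ‖n‖_2. -/

import Mathlib

open Matrix Finset
open scoped ComplexOrder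

noncomputable section
open scoped Classical

def enorm2 {n : ℕ} (v : Fin n → ℂ) : ℝ := ‖(WithLp.equiv 2 (Fin n → ℂ)).symm v‖

def snorm {m n : ℕ} (A : Matrix (Fin m) (Fin n) ℂ) : ℝ :=
  ‖LinearMap.toContinuousLinearMap (Matrix.toEuclideanLin A)‖

def invSqrt {n : ℕ} (M : Matrix (Fin n) (Fin n) ℂ) : Matrix (Fin n) (Fin n) ℂ :=
  if h : M.PosSemidef then
    ((h.1.eigenvectorUnitary : Matrix (Fin n) (Fin n) ℂ) * diagonal ((↑) ∘ (√·) ∘ h.1.eigenvalues) *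
    (star h.1.eigenvectorUnitary : Matrix (Fin n) (Fin n) ℂ))⁻¹ else 0

def msqrt {n : ℕ} (M : Matrix (Fin n) (Fin n) ℂ) : Matrix (Fin n) (Fin n) ℂ :=
  if h : M.PosSemidef then
    ((h.1.eigenvectorUnitary : Matrix (Fin n) (Fin n) ℂ) * diagonal ((↑) ∘ (√·) ∘ h.1.eigenvalues) *
    (star h.1.eigenvectorUnitary : Matrix (Fin n) (Fin n) ℂ)) else 0

/-- normalized correlation ‖(AᴴA)^{-1/2} Aᴴ r‖₂ -/
def ncorr {m k : ℕ} (A : Matrix (Fin m) (Fin k) ℂ) (r : Fin m → ℂ) : ℝ :=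
  enorm2 ((invSqrt (Aᴴ * A) * Aᴴ).mulVec r)

end

section Helpers

open Matrix

lemma enorm2_nonneg' {k : ℕ} (v : Fin k → ℂ) : 0 ≤ enorm2 v := norm_nonneg _

lemma snorm_nonneg' {m k : ℕ} (A : Matrix (Fin m) (Fin k) ℂ) : 0 ≤ snorm A := norm_nonneg _

lemma enorm2_mulVec_le {m k : ℕ} (Q : Matrix (Fin m) (Fin k) ℂ) (v : Fin k → ℂ) :
    enorm2 (Q.mulVec v) ≤ snorm Q * enorm2 v :=
  (LinearMap.toContinuousLinearMap (Matrix.toEuclideanLin Q)).le_opNorm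
    ((WithLp.equiv 2 (Fin k → ℂ)).symm v)

lemma enorm2_eq_sqrt {k : ℕ} (v : Fin k → ℂ) :
    enorm2 v = Real.sqrt ((star v ⬝ᵥ v).re) := by
  rw [enorm2, EuclideanSpace.norm_eq]
  congr 1
  simp only [dotProduct, Pi.star_apply, Complex.re_sum, WithLp.equiv_symm_apply, PiLp.toLp_apply]
  refine Finset.sum_congr rfl fun i _ => ?_
  simp [Complex.sq_norm, Complex.normSq_apply, Complex.mul_re]

lemma enorm2_mulVec_gram {m m' k : ℕ} (P : Matrix (Fin m) (Fin k) ℂ)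
    (Q : Matrix (Fin m') (Fin k) ℂ) (h : Pᴴ * P = Qᴴ * Q) (v : Fin k → ℂ) :
    enorm2 (P.mulVec v) = enorm2 (Q.mulVec v) := by
  rw [enorm2_eq_sqrt, enorm2_eq_sqrt, star_mulVec, dotProduct_mulVec, vecMul_vecMul,
    star_mulVec, dotProduct_mulVec, vecMul_vecMul, h]

lemma enorm2_add_le {k : ℕ} (a b : Fin k → ℂ) : enorm2 (a + b) ≤ enorm2 a + enorm2 b := by
  rw [enorm2, enorm2, enorm2]
  have : (WithLp.equiv 2 (Fin k → ℂ)).symm (a + b)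
      = (WithLp.equiv 2 (Fin k → ℂ)).symm a + (WithLp.equiv 2 (Fin k → ℂ)).symm b := rfl
  rw [this]
  exact norm_add_le _ _

lemma enorm2_zero' {k : ℕ} : enorm2 (0 : Fin k → ℂ) = 0 := by
  rw [enorm2]
  have : (WithLp.equiv 2 (Fin k → ℂ)).symm 0 = 0 := rfl
  rw [this, norm_zero]

lemma enorm2_sum_le {k : ℕ} {ι : Type*} [DecidableEq ι] (s : Finset ι) (f : ι → Fin k → ℂ) :
    enorm2 (∑ i ∈ s, f i) ≤ ∑ i ∈ s, enorm2 (f i) := by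
  induction s using Finset.induction with
  | empty => simp [enorm2_zero']
  | insert _ _ h ih =>
    rw [Finset.sum_insert h, Finset.sum_insert h]
    exact (enorm2_add_le _ _).trans (by linarith)

lemma enorm2_lower {k : ℕ} (a b c : Fin k → ℂ) :
    enorm2 a - enorm2 b - enorm2 c ≤ enorm2 (a + b + c) := by
  have h1 : enorm2 a ≤ enorm2 (a + b + c) + enorm2 b + enorm2 c := by
    have ha : a = (a + b + c) + (-b) + (-c) := by abel
    have h2 := enorm2_add_le ((a + b + c) + (-b)) (-c)
    have h3 := enorm2_add_le (a + b + c) (-b)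
    have hnb : enorm2 (-b) = enorm2 b := by
      rw [enorm2, enorm2]
      have : (WithLp.equiv 2 (Fin k → ℂ)).symm (-b) = -((WithLp.equiv 2 (Fin k → ℂ)).symm b) := rfl
      rw [this, norm_neg]
    have hnc : enorm2 (-c) = enorm2 c := by
      rw [enorm2, enorm2]
      have : (WithLp.equiv 2 (Fin k → ℂ)).symm (-c) = -((WithLp.equiv 2 (Fin k → ℂ)).symm c) := rfl
      rw [this, norm_neg]
    calc enorm2 a = enorm2 ((a + b + c) + (-b) + (-c)) := by rw [← ha]
      _ ≤ enorm2 ((a + b + c) + (-b)) + enorm2 (-c) := h2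
      _ ≤ enorm2 (a + b + c) + enorm2 (-b) + enorm2 (-c) := by linarith
      _ = enorm2 (a + b + c) + enorm2 b + enorm2 c := by rw [hnb, hnc]
  linarith

lemma sqrtAux_mul_self {k : ℕ} {G : Matrix (Fin k) (Fin k) ℂ} (hps : G.PosSemidef) :
    ((hps.1.eigenvectorUnitary : Matrix (Fin k) (Fin k) ℂ) * diagonal ((↑) ∘ (√·) ∘ hps.1.eigenvalues) *
    (star hps.1.eigenvectorUnitary : Matrix (Fin k) (Fin k) ℂ)) * ((hps.1.eigenvectorUnitary : Matrix (Fin k) (Fin k) ℂ) * diagonal ((↑) ∘ (√·) ∘ hps.1.eigenvalues) *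
    (star hps.1.eigenvectorUnitary : Matrix (Fin k) (Fin k) ℂ)) = G := by
  have hU : (star hps.1.eigenvectorUnitary : Matrix (Fin k) (Fin k) ℂ) * hps.1.eigenvectorUnitary = 1 :=
    Unitary.coe_star_mul_self _
  simp only [Matrix.mul_assoc]
  rw [← Matrix.mul_assoc (star (hps.1.eigenvectorUnitary : Matrix (Fin k) (Fin k) ℂ)) _ _, hU,
    Matrix.one_mul, ← Matrix.mul_assoc (diagonal _), diagonal_mul_diagonal]
  conv_rhs => rw [hps.1.spectral_theorem]
  rw [Unitary.conjStarAlgAut_apply, Matrix.mul_assoc]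
  congr 3
  funext i
  simp only [Function.comp_apply]
  rw [← Complex.ofReal_mul, Real.mul_self_sqrt (hps.eigenvalues_nonneg i)]
  rfl

lemma sqrtAux_herm {k : ℕ} {G : Matrix (Fin k) (Fin k) ℂ} (hps : G.PosSemidef) :
    ((hps.1.eigenvectorUnitary : Matrix (Fin k) (Fin k) ℂ) * diagonal ((↑) ∘ (√·) ∘ hps.1.eigenvalues) *
    (star hps.1.eigenvectorUnitary : Matrix (Fin k) (Fin k) ℂ))ᴴ = ((hps.1.eigenvectorUnitary : Matrix (Fin k) (Fin k) ℂ) * diagonal ((↑) ∘ (√·) ∘ hps.1.eigenvalues) *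
    (star hps.1.eigenvectorUnitary : Matrix (Fin k) (Fin k) ℂ)) := by
  rw [conjTranspose_mul, conjTranspose_mul, diagonal_conjTranspose, Matrix.mul_assoc]
  simp only [← Matrix.star_eq_conjTranspose, star_star]
  congr 3
  funext i
  simp

lemma invSqrt_mul_self {k : ℕ} {G : Matrix (Fin k) (Fin k) ℂ} (hG : G.PosDef) :
    invSqrt G * G = msqrt G := by
  have hps := hG.posSemidef
  rw [invSqrt, msqrt, dif_pos hps, dif_pos hps]
  set S := ((hps.1.eigenvectorUnitary : Matrix (Fin k) (Fin k) ℂ) * diagonal ((↑) ∘ (√·) ∘ hps.1.eigenvalues) *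
    (star hps.1.eigenvectorUnitary : Matrix (Fin k) (Fin k) ℂ)) with hS
  have hSS : S * S = G := sqrtAux_mul_self hps
  have hdet : S.det * S.det = G.det := by
    rw [← Matrix.det_mul, hSS]
  have hGdet : G.det ≠ 0 := hG.det_pos.ne'
  have hunit : IsUnit S.det := by
    refine isUnit_iff_ne_zero.2 fun h0 => hGdet ?_
    rw [← hdet, h0, mul_zero]
  calc S⁻¹ * G = S⁻¹ * (S * S) := by rw [hSS]
    _ = S⁻¹ * S * S := (Matrix.mul_assoc _ _ _).symm
    _ = S := by rw [Matrix.nonsing_inv_mul _ hunit, one_mul]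

lemma msqrt_gram {k : ℕ} {G : Matrix (Fin k) (Fin k) ℂ} (hG : G.PosSemidef) :
    (msqrt G)ᴴ * msqrt G = G := by
  rw [msqrt, dif_pos hG, sqrtAux_herm hG, sqrtAux_mul_self hG]

end Helpers

/-- lower bound on the minimum normalized correlation over used blocks. -/
theorem zdgroth_used_lower_bound
    {M B : ℕ} {Ni : Fin B → ℕ}
    (A : (i : Fin B) → Matrix (Fin M) (Fin (Ni i)) ℂ)
    (x : (i : Fin B) → Fin (Ni i) → ℂ)
    (n : Fin M → ℂ) (U : Finset (Fin B))
    (hrank : ∀ i, ((A i)ᴴ * A i).PosDef)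
    (hU : U.Nonempty)
    (μB σmin xmin : ℝ)
    (hμ : ∀ i j, i ≠ j → snorm (invSqrt ((A i)ᴴ * A i) * ((A i)ᴴ * A j)) ≤ μB)
    (hσ : ∀ i, ∀ v : Fin (Ni i) → ℂ, σmin * enorm2 v ≤ enorm2 ((A i).mulVec v))
    (hxmin_le : ∀ j ∈ U, xmin ≤ enorm2 (x j))
    (hxmin_mem : ∃ j ∈ U, enorm2 (x j) = xmin)
    (hnorm : ∀ j, snorm (invSqrt ((A j)ᴴ * A j) * (A j)ᴴ) ≤ 1)
    (y : Fin M → ℂ)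
    (hy : y = (∑ j ∈ U, (A j).mulVec (x j)) + n) :
    ∀ j ∈ U,
      σmin * xmin - μB * (∑ j ∈ U, enorm2 (x j)) + μB * xmin - enorm2 n
        ≤ ncorr (A j) y := by
  classical
  intro j hj
  set G := (A j)ᴴ * A j with hGdef
  have hG : G.PosDef := hrank j
  set W := invSqrt G * (A j)ᴴ with hWdef
  -- decomposition of W *ᵥ y
  have hsum : W *ᵥ (∑ i ∈ U, (A i) *ᵥ (x i)) = ∑ i ∈ U, (W * A i) *ᵥ (x i) := by
    calc W *ᵥ (∑ i ∈ U, (A i) *ᵥ (x i))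
        = Matrix.mulVecLin W (∑ i ∈ U, (A i) *ᵥ (x i)) := rfl
      _ = ∑ i ∈ U, Matrix.mulVecLin W ((A i) *ᵥ (x i)) := map_sum _ _ _
      _ = ∑ i ∈ U, (W * A i) *ᵥ (x i) := by
            refine Finset.sum_congr rfl fun i _ => ?_
            rw [Matrix.mulVecLin_apply, Matrix.mulVec_mulVec]
  have hdecomp : W *ᵥ y
      = (W * A j) *ᵥ (x j) + (∑ i ∈ U.erase j, (W * A i) *ᵥ (x i)) + W *ᵥ n := by
    rw [hy, Matrix.mulVec_add, hsum, ← Finset.add_sum_erase U _ hj]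
  -- the main term
  have hWAj : W * A j = msqrt G := by
    rw [hWdef, Matrix.mul_assoc, ← hGdef, invSqrt_mul_self hG]
  have hmain : σmin * enorm2 (x j) ≤ enorm2 ((W * A j) *ᵥ (x j)) := by
    rw [hWAj, enorm2_mulVec_gram (msqrt G) (A j) (by rw [msqrt_gram hG.posSemidef, hGdef])]
    exact hσ j (x j)
  -- cross terms
  have hcross : ∀ i ∈ U.erase j, enorm2 ((W * A i) *ᵥ (x i)) ≤ μB * enorm2 (x i) := by
    intro i hi
    have hne : j ≠ i := (Finset.mem_erase.1 hi).1.symm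
    have h1 : W * A i = invSqrt G * ((A j)ᴴ * A i) := by rw [hWdef, Matrix.mul_assoc]
    calc enorm2 ((W * A i) *ᵥ (x i)) ≤ snorm (W * A i) * enorm2 (x i) := enorm2_mulVec_le _ _
      _ ≤ μB * enorm2 (x i) := by
          apply mul_le_mul_of_nonneg_right _ (enorm2_nonneg' _)
          rw [h1]; exact hμ j i hne
  have hcross_sum : enorm2 (∑ i ∈ U.erase j, (W * A i) *ᵥ (x i))
      ≤ μB * ((∑ i ∈ U, enorm2 (x i)) - enorm2 (x j)) := by
    calc enorm2 (∑ i ∈ U.erase j, (W * A i) *ᵥ (x i))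
        ≤ ∑ i ∈ U.erase j, enorm2 ((W * A i) *ᵥ (x i)) := enorm2_sum_le _ _
      _ ≤ ∑ i ∈ U.erase j, μB * enorm2 (x i) := Finset.sum_le_sum hcross
      _ = μB * ∑ i ∈ U.erase j, enorm2 (x i) := by rw [Finset.mul_sum]
      _ = μB * ((∑ i ∈ U, enorm2 (x i)) - enorm2 (x j)) := by
          rw [Finset.sum_erase_eq_sub hj]
  -- noise term
  have hnoise : enorm2 (W *ᵥ n) ≤ enorm2 n := by
    calc enorm2 (W *ᵥ n) ≤ snorm W * enorm2 n := enorm2_mulVec_le _ _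
      _ ≤ 1 * enorm2 n := mul_le_mul_of_nonneg_right (hnorm j) (enorm2_nonneg' _)
      _ = enorm2 n := one_mul _
  -- key inequality (★)
  have hncorr : ncorr (A j) y = enorm2 (W *ᵥ y) := rfl
  have hstar : σmin * enorm2 (x j) - μB * ((∑ i ∈ U, enorm2 (x i)) - enorm2 (x j)) - enorm2 n
      ≤ ncorr (A j) y := by
    rw [hncorr, hdecomp]
    have := enorm2_lower ((W * A j) *ᵥ (x j)) (∑ i ∈ U.erase j, (W * A i) *ᵥ (x i)) (W *ᵥ n)
    linarith
  -- arithmetic finish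
  obtain ⟨j₀, hj₀, hxj₀⟩ := hxmin_mem
  have hxmin_nonneg : 0 ≤ xmin := hxj₀ ▸ enorm2_nonneg' _
  have hxj : xmin ≤ enorm2 (x j) := hxmin_le j hj
  have hSfull_nonneg : 0 ≤ ∑ i ∈ U, enorm2 (x i) :=
    Finset.sum_nonneg fun i _ => enorm2_nonneg' _
  have hn_nonneg : 0 ≤ enorm2 n := enorm2_nonneg' _
  have hncorr_nonneg : 0 ≤ ncorr (A j) y := enorm2_nonneg' _
  by_cases hμsign : 0 ≤ μB
  · by_cases hcase : 0 ≤ σmin + μB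
    · nlinarith [hstar, hxj, hcase]
    · nlinarith [hncorr_nonneg, hxmin_nonneg, hSfull_nonneg, hn_nonneg]
  · -- μB < 0 forces B = 1, hence U = {j} and enorm2 (x j) = xmin
    push_neg at hμsign
    have hall : ∀ i k : Fin B, i = k := by
      intro i k
      by_contra hne
      have h1 := hμ i k hne
      have h2 : (0:ℝ) ≤ snorm (invSqrt ((A i)ᴴ * A i) * ((A i)ᴴ * A k)) := snorm_nonneg' _
      linarith
    have hUj : U = {j} := by
      apply Finset.eq_singleton_iff_unique_mem.2
      exact ⟨hj, fun i _ => hall i j⟩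
    have hj₀j : j₀ = j := hall j₀ j
    have hxjxmin : enorm2 (x j) = xmin := by rw [← hj₀j] at *; exact hxj₀
    have hSfull : (∑ i ∈ U, enorm2 (x i)) = xmin := by
      rw [hUj, Finset.sum_singleton, hxjxmin]
    rw [hSfull]
    have := hstar
    rw [hSfull, hxjxmin] at this
    linarith
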